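/- arXiv:2303.02090 — 6 statements merged into one kernel-verified Lean document; each statement's English description precedes it below -/
import Mathlib

section
/- Let A_RK = UΣVᵀ be a singular value decomposition of a real s×s matrix (U, V real orthogonal, Σ diagonal with positive diagonal entries), let M be a symmetric positive definite real n×n matrix, K a symmetric positive semidefinite real n×n matrix, and τ > 0. Assume that for every nonzero complex vector y ∈ ℂˢ the real part of the Rayleigh quotient y*(UᵀV)y/(y*y) is positive. Then every generalized eigenvalue λ ∈ ℂ of the pair (Θ, P_RK) — i.e., every λ ∈ ℂ for which there exists a nonzero x ∈ ℂ^{s·n} with Θx = λ P_RK x — satisfies Re λ > 0 and |λ| ≤ 1; that is, λ lies in the right half of the closed unit disk centered at the origin of the complex plane. -/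
/-!
Conjugating by `U ⊗ I` and `Vᵀ ⊗ I` turns the pencil `(Θ, P_RK)` into
`(Q ⊗ M + E, I ⊗ M + E)` with `Q = UᵀV` orthogonal and `E = τ Σ ⊗ K ⪰ 0`. Pairing the eigen-equation
with the transformed eigenvector `w` gives `α + β = λ (μ + β)` where `β = w*Ew ≥ 0`,
`μ = w*(I ⊗ M)w > 0` and `α = w*(Q ⊗ M)w`. Writing `M = BᴴB`, `α` is the quadratic form of the
unitary `Q ⊗ I` at `(I ⊗ B)w`, so `|α| ≤ μ` by Cauchy–Schwarz; and `Re α = w*(ℜQ ⊗ M)w > 0`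
because the Hermitian part `ℜQ` and `M` are positive definite. Hence `λ = (α + β)/(μ + β)` has
positive real part and modulus at most `1`.
-/

open Matrix Kronecker ComplexOrder ComplexStarModule

lemma Complex.re_pos_and_norm_le_one_of_add_eq_mul_add {α lam : ℂ} {r b : ℝ} (hα : 0 < α.re)
    (hαr : ‖α‖ ≤ r) (hb : 0 ≤ b) (h : α + b = lam * (r + b)) :
    0 < lam.re ∧ ‖lam‖ ≤ 1 := by
  have hD : 0 < r + b := by linarith [hα.trans_le ((Complex.re_le_norm α).trans hαr)]
  rw [← Complex.ofReal_add] at h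
  constructor
  · have hre := congrArg Complex.re h
    rw [Complex.add_re, Complex.ofReal_re, Complex.re_mul_ofReal] at hre
    exact pos_of_mul_pos_left (by linarith) hD.le
  · have hnorm : ‖lam‖ * (r + b) ≤ 1 * (r + b) :=
      calc ‖lam‖ * (r + b) = ‖α + b‖ := by rw [h, norm_mul, Complex.norm_of_nonneg hD.le]
        _ ≤ ‖α‖ + b := by simpa [abs_of_nonneg hb] using norm_add_le α b
        _ ≤ 1 * (r + b) := by linarith
    exact le_of_mul_le_mul_right hnorm hD

lemma RingHom.mapMatrix_kronecker {ι κ R S : Type*} [Fintype ι] [Fintype κ] [DecidableEq ι]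
    [DecidableEq κ] [Semiring R] [Semiring S] (f : R →+* S) (A : Matrix ι ι R)
    (B : Matrix κ κ R) : f.mapMatrix (A ⊗ₖ B) = f.mapMatrix A ⊗ₖ f.mapMatrix B := by
  ext; simp

namespace Matrix

lemma realPart_kronecker {ι κ : Type*} (Q : Matrix ι ι ℂ) {M : Matrix κ κ ℂ}
    (hM : M.IsHermitian) : (ℜ (Q ⊗ₖ M) : Matrix (ι × κ) (ι × κ) ℂ) = (ℜ Q : Matrix ι ι ℂ) ⊗ₖ M := by
  rw [realPart_apply_coe, realPart_apply_coe, star_eq_conjTranspose, star_eq_conjTranspose,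
    conjTranspose_kronecker, hM.eq, smul_kronecker, add_kronecker]

lemma one_kronecker_add_smul_kronecker_eq_mul_mul {ι κ R : Type*} [Fintype ι] [DecidableEq ι]
    [Fintype κ] [DecidableEq κ] [CommRing R] {U V : Matrix ι ι R} (hU : U * Uᵀ = 1)
    (hV : V * Vᵀ = 1) (D : Matrix ι ι R) (M K : Matrix κ κ R) (τ : R) :
    1 ⊗ₖ M + τ • ((U * D * Vᵀ) ⊗ₖ K) =
      (U ⊗ₖ 1) * ((Uᵀ * V) ⊗ₖ M + τ • (D ⊗ₖ K)) * (Vᵀ ⊗ₖ 1) := by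
  have hUQV : U * (Uᵀ * V) * Vᵀ = 1 := by rw [← Matrix.mul_assoc, hU, Matrix.one_mul, hV]
  rw [Matrix.mul_add, Matrix.add_mul, ← mul_kronecker_mul, ← mul_kronecker_mul, Matrix.mul_smul,
    Matrix.smul_mul, ← mul_kronecker_mul, ← mul_kronecker_mul, hUQV, Matrix.one_mul,
    Matrix.mul_one, Matrix.one_mul, Matrix.mul_one]

lemma mulVec_eq_smul_mulVec_of_mul_mul {m R : Type*} [Fintype m] [DecidableEq m] [CommRing R]
    {X A B Y : Matrix m m R} (hX : IsUnit X) {x : m → R} {c : R}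
    (h : (X * A * Y) *ᵥ x = c • ((X * B * Y) *ᵥ x)) : A *ᵥ (Y *ᵥ x) = c • (B *ᵥ (Y *ᵥ x)) := by
  apply mulVec_injective_of_isUnit hX
  simpa only [mulVec_smul, mulVec_mulVec, Matrix.mul_assoc] using h

variable {ι κ : Type*} [Fintype ι] [Fintype κ]

lemma star_dotProduct_conjTranspose_mulVec {R : Type*} [CommSemiring R] [StarRing R]
    (A : Matrix ι ι R) (x : ι → R) : star x ⬝ᵥ Aᴴ *ᵥ x = star (star x ⬝ᵥ A *ᵥ x) := by
  rw [star_dotProduct, star_mulVec, conjTranspose_conjTranspose, dotProduct_mulVec]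

lemma star_dotProduct_conjTranspose_mul_mul_mulVec {m R : Type*} [Fintype m] [CommSemiring R]
    [StarRing R] (A : Matrix m ι R) (C : Matrix m m R) (w : ι → R) :
    star w ⬝ᵥ (Aᴴ * C * A) *ᵥ w = star (A *ᵥ w) ⬝ᵥ C *ᵥ (A *ᵥ w) := by
  rw [star_mulVec, ← dotProduct_mulVec, mulVec_mulVec, mulVec_mulVec, Matrix.mul_assoc]

open scoped MatrixOrder in
lemma PosSemidef.map_ofReal {A : Matrix ι ι ℝ} (hA : A.PosSemidef) :
    (A.map Complex.ofReal).PosSemidef := by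
  classical
  obtain ⟨B, rfl⟩ := CStarAlgebra.nonneg_iff_eq_star_mul_self.mp hA.nonneg
  have hmap : (star B * B).map Complex.ofReal =
      (B.map Complex.ofReal)ᴴ * B.map Complex.ofReal := by
    ext; simp [mul_apply]
  exact hmap ▸ posSemidef_conjTranspose_mul_self _

lemma PosDef.map_ofReal [DecidableEq ι] {A : Matrix ι ι ℝ} (hA : A.PosDef) :
    (A.map Complex.ofReal).PosDef :=
  hA.posSemidef.map_ofReal.posDef_iff_isUnit.mpr (hA.isUnit.map Complex.ofRealHom.mapMatrix)

lemma conjTranspose_mapMatrix_ofReal_mul_self [DecidableEq ι] {A : Matrix ι ι ℝ}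
    (hA : Aᵀ * A = 1) : (Complex.ofRealHom.mapMatrix A)ᴴ * Complex.ofRealHom.mapMatrix A = 1 := by
  have hT : (Complex.ofRealHom.mapMatrix A)ᴴ = Complex.ofRealHom.mapMatrix Aᵀ := by ext; simp
  rw [hT, ← map_mul, hA, map_one]

lemma ofReal_re_star_dotProduct_mulVec (A : Matrix ι ι ℂ) (x : ι → ℂ) :
    ((star x ⬝ᵥ A *ᵥ x).re : ℂ) = star x ⬝ᵥ (ℜ A : Matrix ι ι ℂ) *ᵥ x := by
  rw [realPart_apply_coe, smul_mulVec, add_mulVec, dotProduct_smul, dotProduct_add,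
    star_eq_conjTranspose, star_dotProduct_conjTranspose_mulVec, Complex.re_eq_add_conj,
    Complex.real_smul, Complex.star_def]
  push_cast
  ring

lemma re_star_dotProduct_mulVec_pos_of_re_div_pos {A : Matrix ι ι ℂ} {y : ι → ℂ} (hy : y ≠ 0)
    (h : 0 < ((star y ⬝ᵥ A *ᵥ y) / (star y ⬝ᵥ y)).re) : 0 < (star y ⬝ᵥ A *ᵥ y).re := by
  have hpos : 0 < star y ⬝ᵥ y := dotProduct_star_self_pos_iff.mpr hy
  rw [Complex.eq_re_of_ofReal_le (r := 0) (z := star y ⬝ᵥ y) (by exact_mod_cast hpos.le),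
    Complex.div_ofReal_re] at h
  exact (div_pos_iff_of_pos_right (Complex.pos_iff.mp hpos).1).mp h

lemma posDef_realPart_of_re_pos {Q : Matrix ι ι ℂ}
    (hQ : ∀ y : ι → ℂ, y ≠ 0 → 0 < (star y ⬝ᵥ Q *ᵥ y).re) : (ℜ Q : Matrix ι ι ℂ).PosDef := by
  refine PosDef.of_dotProduct_mulVec_pos (ℜ Q).2 fun y hy => ?_
  rw [← ofReal_re_star_dotProduct_mulVec]
  exact_mod_cast hQ y hy

lemma re_star_dotProduct_kronecker_mulVec_pos {Q : Matrix ι ι ℂ}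
    (hQ : ∀ y : ι → ℂ, y ≠ 0 → 0 < (star y ⬝ᵥ Q *ᵥ y).re) {M : Matrix κ κ ℂ} (hM : M.PosDef)
    {w : ι × κ → ℂ} (hw : w ≠ 0) : 0 < (star w ⬝ᵥ (Q ⊗ₖ M) *ᵥ w).re := by
  have hpos := ((posDef_realPart_of_re_pos hQ).kronecker hM).dotProduct_mulVec_pos hw
  rwa [← realPart_kronecker _ hM.isHermitian, ← ofReal_re_star_dotProduct_mulVec,
    Complex.zero_lt_real] at hpos

lemma norm_star_dotProduct_mulVec_le [DecidableEq ι] {W : Matrix ι ι ℂ} (hW : Wᴴ * W = 1)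
    (u : ι → ℂ) : ‖star u ⬝ᵥ W *ᵥ u‖ ≤ (star u ⬝ᵥ u).re := by
  have hcs := norm_inner_le_norm (𝕜 := ℂ) (WithLp.toLp 2 u) (WithLp.toLp 2 (W *ᵥ u))
  have hnorm : ∀ v : ι → ℂ, ‖WithLp.toLp 2 v‖ ^ 2 = (star v ⬝ᵥ v).re := fun v => by
    rw [← inner_self_eq_norm_sq (𝕜 := ℂ), EuclideanSpace.inner_toLp_toLp, dotProduct_comm]; rfl
  have hWu : star (W *ᵥ u) ⬝ᵥ W *ᵥ u = star u ⬝ᵥ u := by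
    rw [star_mulVec, ← dotProduct_mulVec, mulVec_mulVec, hW, one_mulVec]
  have hnorm_eq : ‖WithLp.toLp 2 (W *ᵥ u)‖ = ‖WithLp.toLp 2 u‖ := by
    rw [← sq_eq_sq₀ (norm_nonneg _) (norm_nonneg _), hnorm, hnorm, hWu]
  rwa [EuclideanSpace.inner_toLp_toLp, dotProduct_comm, hnorm_eq, ← sq, hnorm] at hcs

open scoped MatrixOrder in
lemma norm_star_dotProduct_kronecker_mulVec_le [DecidableEq ι] [DecidableEq κ]
    {Q : Matrix ι ι ℂ} (hQ : Qᴴ * Q = 1) {M : Matrix κ κ ℂ} (hM : M.PosSemidef)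
    (w : ι × κ → ℂ) : ‖star w ⬝ᵥ (Q ⊗ₖ M) *ᵥ w‖ ≤ (star w ⬝ᵥ (1 ⊗ₖ M) *ᵥ w).re := by
  obtain ⟨B, rfl⟩ := CStarAlgebra.nonneg_iff_eq_star_mul_self.mp hM.nonneg
  have hconj : ∀ P : Matrix ι ι ℂ, P ⊗ₖ (star B * B) = (1 ⊗ₖ B)ᴴ * (P ⊗ₖ 1) * (1 ⊗ₖ B) := by
    intro P
    rw [conjTranspose_kronecker, conjTranspose_one, ← mul_kronecker_mul, ← mul_kronecker_mul,
      Matrix.one_mul, Matrix.mul_one, Matrix.mul_one, star_eq_conjTranspose]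
  have hunitary : (Q ⊗ₖ (1 : Matrix κ κ ℂ))ᴴ * (Q ⊗ₖ 1) = 1 := by
    rw [conjTranspose_kronecker, ← mul_kronecker_mul, hQ, conjTranspose_one, Matrix.one_mul,
      one_kronecker_one]
  rw [hconj, hconj, star_dotProduct_conjTranspose_mul_mul_mulVec,
    star_dotProduct_conjTranspose_mul_mul_mulVec, one_kronecker_one, one_mulVec]
  exact norm_star_dotProduct_mulVec_le hunitary _

theorem re_pos_and_norm_le_one_of_kronecker_mulVec_eq [DecidableEq ι] [DecidableEq κ]
    {Q : Matrix ι ι ℂ} (hQu : Qᴴ * Q = 1) (hQ : ∀ y : ι → ℂ, y ≠ 0 → 0 < (star y ⬝ᵥ Q *ᵥ y).re)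
    {M : Matrix κ κ ℂ} (hM : M.PosDef) {E : Matrix (ι × κ) (ι × κ) ℂ} (hE : E.PosSemidef)
    {w : ι × κ → ℂ} (hw : w ≠ 0) {lam : ℂ}
    (h : (Q ⊗ₖ M + E) *ᵥ w = lam • ((1 ⊗ₖ M + E) *ᵥ w)) : 0 < lam.re ∧ ‖lam‖ ≤ 1 := by
  obtain ⟨r, -, hr⟩ := RCLike.nonneg_iff_exists_ofReal.mp
    ((PosSemidef.one.kronecker hM.posSemidef).dotProduct_mulVec_nonneg w)
  obtain ⟨b, hb, hβ⟩ := RCLike.nonneg_iff_exists_ofReal.mp (hE.dotProduct_mulVec_nonneg w)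
  refine Complex.re_pos_and_norm_le_one_of_add_eq_mul_add (r := r)
    (re_star_dotProduct_kronecker_mulVec_pos hQ hM hw) ?_ hb ?_
  · simpa [← hr] using norm_star_dotProduct_kronecker_mulVec_le hQu hM.posSemidef w
  · have hform := congrArg (star w ⬝ᵥ ·) h
    simp only [add_mulVec, dotProduct_add, dotProduct_smul, smul_eq_mul, ← hr, ← hβ] at hform
    linear_combination hform

end Matrix

theorem stmt_0_general {s n : ℕ}
    (U V : Matrix (Fin s) (Fin s) ℝ) (hU : Uᵀ * U = 1) (hV : Vᵀ * V = 1)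
    (d : Fin s → ℝ) (hd : ∀ i, 0 < d i)
    (M K : Matrix (Fin n) (Fin n) ℝ) (hM : M.PosDef) (hK : K.PosSemidef)
    (τ : ℝ) (hτ : 0 < τ)
    (hray : ∀ y : Fin s → ℂ, y ≠ 0 →
      0 < ((star y ⬝ᵥ ((Uᵀ * V).map Complex.ofReal) *ᵥ y) / (star y ⬝ᵥ y)).re)
    (Θ P_RK : Matrix (Fin s × Fin n) (Fin s × Fin n) ℝ)
    (hΘ : Θ = (1 : Matrix (Fin s) (Fin s) ℝ) ⊗ₖ M +
        τ • ((U * Matrix.diagonal d * Vᵀ) ⊗ₖ K))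
    (hP : P_RK = (U ⊗ₖ (1 : Matrix (Fin n) (Fin n) ℝ)) *
        ((1 : Matrix (Fin s) (Fin s) ℝ) ⊗ₖ M + τ • (Matrix.diagonal d ⊗ₖ K)) *
        (Vᵀ ⊗ₖ (1 : Matrix (Fin n) (Fin n) ℝ)))
    (lam : ℂ)
    (hlam : ∃ x : Fin s × Fin n → ℂ, x ≠ 0 ∧
      (Θ.map Complex.ofReal) *ᵥ x = lam • ((P_RK.map Complex.ofReal) *ᵥ x)) :
    0 < lam.re ∧ ‖lam‖ ≤ 1 := by
  obtain ⟨x, hx, heq⟩ := hlam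
  have hUUt := mul_eq_one_comm.mp hU
  have hE : (τ • (diagonal d ⊗ₖ K)).PosSemidef :=
    ((PosSemidef.diagonal fun i => (hd i).le).kronecker hK).smul hτ.le
  have hX : IsUnit (U ⊗ₖ (1 : Matrix (Fin n) (Fin n) ℝ)) :=
    (IsUnit.of_mul_eq_one _ hUUt).kronecker isUnit_one
  have hY : IsUnit (Vᵀ ⊗ₖ (1 : Matrix (Fin n) (Fin n) ℝ)) :=
    (IsUnit.of_mul_eq_one _ hV).kronecker isUnit_one
  let φ : Matrix (Fin s × Fin n) (Fin s × Fin n) ℝ →+* _ := Complex.ofRealHom.mapMatrix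
  replace heq : φ Θ *ᵥ x = lam • (φ P_RK *ᵥ x) := heq
  rw [hΘ, one_kronecker_add_smul_kronecker_eq_mul_mul hUUt (mul_eq_one_comm.mp hV), hP,
    map_mul, map_mul, map_mul, map_mul] at heq
  have hw := mulVec_eq_smul_mulVec_of_mul_mul (hX.map φ) heq
  rw [map_add, map_add, RingHom.mapMatrix_kronecker (A := Uᵀ * V),
    RingHom.mapMatrix_kronecker (A := 1), map_one] at hw
  refine re_pos_and_norm_le_one_of_kronecker_mulVec_eq ?_
    (fun y hy => re_star_dotProduct_mulVec_pos_of_re_div_pos hy (hray y hy))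
    hM.map_ofReal hE.map_ofReal ?_ hw
  · refine conjTranspose_mapMatrix_ofReal_mul_self ?_
    rw [transpose_mul, transpose_transpose, Matrix.mul_assoc, ← Matrix.mul_assoc U, hUUt,
      Matrix.one_mul, hV]
  · exact fun h => hx (mulVec_injective_of_isUnit (hY.map φ) (h.trans (mulVec_zero _).symm))

theorem stmt_0 {s n : ℕ} (hs : 0 < s) (hn : 0 < n)
    (U V : Matrix (Fin s) (Fin s) ℝ) (hU : Uᵀ * U = 1) (hV : Vᵀ * V = 1)
    (d : Fin s → ℝ) (hd : ∀ i, 0 < d i)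
    (M K : Matrix (Fin n) (Fin n) ℝ) (hM : M.PosDef) (hK : K.PosSemidef)
    (τ : ℝ) (hτ : 0 < τ)
    (hray : ∀ y : Fin s → ℂ, y ≠ 0 →
      0 < ((star y ⬝ᵥ ((Uᵀ * V).map Complex.ofReal) *ᵥ y) / (star y ⬝ᵥ y)).re)
    (Θ P_RK : Matrix (Fin s × Fin n) (Fin s × Fin n) ℝ)
    (hΘ : Θ = (1 : Matrix (Fin s) (Fin s) ℝ) ⊗ₖ M +
        τ • ((U * Matrix.diagonal d * Vᵀ) ⊗ₖ K))
    (hP : P_RK = (U ⊗ₖ (1 : Matrix (Fin n) (Fin n) ℝ)) *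
        ((1 : Matrix (Fin s) (Fin s) ℝ) ⊗ₖ M + τ • (Matrix.diagonal d ⊗ₖ K)) *
        (Vᵀ ⊗ₖ (1 : Matrix (Fin n) (Fin n) ℝ)))
    (lam : ℂ)
    (hlam : ∃ x : Fin s × Fin n → ℂ, x ≠ 0 ∧
      (Θ.map Complex.ofReal) *ᵥ x = lam • ((P_RK.map Complex.ofReal) *ᵥ x)) :
    0 < lam.re ∧ ‖lam‖ ≤ 1 :=
  stmt_0_general U V hU hV d hd M K hM hK τ hτ hray Θ P_RK hΘ hP lam hlam
end

section
/- Let A_RK = UΣVᵀ be a singular value decomposition of a real s×s matrix (U, V real orthogonal, Σ diagonal with positive diagonal entries), let M be a symmetric positive definite real n×n matrix, K a symmetric positive semidefinite real n×n matrix, and τ > 0. Assume that for every nonzero complex vector y ∈ ℂˢ the real part of the Rayleigh quotient y*(UᵀV)y/(y*y) is positive. Suppose 1 is an eigenvalue of UᵀV (over ℂ) with geometric multiplicity k ≥ 1, i.e., the complex subspace {y ∈ ℂˢ : (UᵀV)y = y} has dimension k. Then the complex subspace {x ∈ ℂ^{s·n} : Θx = P_RK x} has dimension at least k·n; that is, 1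 is a generalized eigenvalue of the pair (Θ, P_RK) with geometric multiplicity at least k·n. -/
/-!
Conjugating by `U ⊗ I` and `Vᵀ ⊗ I` gives `P_RK = U Vᵀ ⊗ M + τ (U Σ Vᵀ) ⊗ K`, so the stiffness
terms cancel and `Θ - P_RK = (I - U Vᵀ) ⊗ M`. Since `M` is invertible, every `n × s` matrix `X` whose
rows lie in `ker (I - U Vᵀ)` gives a kernel vector `vec (M⁻¹ X)` of `(I - U Vᵀ) ⊗ M`, which yields
`n` times the nullity of `I - U Vᵀ`. Finally `I - U Vᵀ = -U (UᵀV - I)ᵀ Uᵀ` has the same rank,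
hence the same nullity, as `UᵀV - I`, whose kernel is the eigenspace of `UᵀV` for the eigenvalue 1.
-/

open Matrix Kronecker

namespace Matrix

variable {K : Type*} [Field K] {l m n : Type*} [Fintype m] [Fintype n]

theorem finrank_ker_mulVecLin_eq_of_rank_eq {A B : Matrix l m K} (h : A.rank = B.rank) :
    Module.finrank K (LinearMap.ker A.mulVecLin) =
      Module.finrank K (LinearMap.ker B.mulVecLin) := by
  have hA := LinearMap.finrank_range_add_finrank_ker A.mulVecLin
  have hB := LinearMap.finrank_range_add_finrank_ker B.mulVecLin
  unfold rank at h
  omega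

theorem rank_one_sub_mul_transpose [DecidableEq n] {U : Matrix n n K} (hU : Uᵀ * U = 1)
    (W : Matrix n n K) : (1 - U * Wᵀ).rank = (Uᵀ * W - 1).rank := by
  have hUU : U * Uᵀ = 1 := mul_eq_one_comm.mp hU
  have hconj : 1 - U * Wᵀ = -U * (Uᵀ * W - 1)ᵀ * Uᵀ := by
    simp [Matrix.sub_mul, Matrix.mul_sub, Matrix.mul_assoc, hUU]
  have hUt : IsUnit Uᵀ.det := isUnit_det_of_left_inverse hUU
  have hnegU : IsUnit (-U).det := isUnit_det_of_left_inverse (B := -Uᵀ) (by rw [neg_mul_neg, hU])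
  rw [hconj, rank_mul_eq_left_of_isUnit_det _ _ hUt, rank_mul_eq_right_of_isUnit_det _ _ hnegU,
    rank_transpose]

theorem finrank_eigenspace_one_eq_finrank_ker_one_sub_mul_transpose [DecidableEq m]
    {U : Matrix m m K} (hU : Uᵀ * U = 1) (W : Matrix m m K) :
    Module.finrank K (Module.End.eigenspace (toLin' (Uᵀ * W)) 1) =
      Module.finrank K (LinearMap.ker (toLin' (1 - U * Wᵀ))) := by
  rw [Module.End.eigenspace_def, one_smul, Module.End.one_eq_id, ← toLin'_one, ← map_sub,
    toLin'_apply', toLin'_apply',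
    finrank_ker_mulVecLin_eq_of_rank_eq (rank_one_sub_mul_transpose hU W)]

theorem mul_finrank_ker_le_finrank_ker_kronecker [DecidableEq n] (A : Matrix l m K)
    {B : Matrix n n K} (hB : IsUnit B) :
    Fintype.card n * Module.finrank K (LinearMap.ker A.mulVecLin) ≤
      Module.finrank K (LinearMap.ker (A ⊗ₖ B).mulVecLin) := by
  have hBdet : IsUnit B.det := (isUnit_iff_isUnit_det B).mp hB
  let Φ : (n → LinearMap.ker A.mulVecLin) →ₗ[K] (m × n → K) :=
    { toFun := fun g => vec (B⁻¹ * of fun j i => (g j : m → K) i)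
      map_add' := fun g h => by rw [← vec_add, ← Matrix.mul_add]; rfl
      map_smul' := fun c g => by rw [RingHom.id_apply, ← vec_smul, ← Matrix.mul_smul]; rfl }
  have hΦ : Function.Injective Φ := by
    rw [injective_iff_map_eq_zero]
    intro g hg
    have hBX : B⁻¹ * (of fun j i => (g j : m → K) i) = 0 := vec_eq_zero_iff.mp hg
    have hX := mul_nonsing_inv_cancel_left B (of fun j i => (g j : m → K) i) hBdet
    rw [hBX, Matrix.mul_zero] at hX
    funext j
    ext i
    exact (congrFun₂ hX j i).symm
  have hrange : LinearMap.range Φ ≤ LinearMap.ker (A ⊗ₖ B).mulVecLin := by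
    rintro _ ⟨g, rfl⟩
    have hrows : (of fun j i => (g j : m → K) i) * Aᵀ = 0 := by
      ext j i
      have hker : A *ᵥ (g j : m → K) = 0 := (g j).2
      simpa [mulVec, dotProduct, mul_apply, mul_comm] using congrFun hker i
    rw [LinearMap.mem_ker, mulVecLin_apply]
    simp only [Φ, LinearMap.coe_mk, AddHom.coe_mk]
    rw [kronecker_mulVec_vec, ← Matrix.mul_assoc, mul_nonsing_inv _ hBdet, Matrix.one_mul, hrows,
      vec_zero]
  calc Fintype.card n * Module.finrank K (LinearMap.ker A.mulVecLin)
      = Module.finrank K (LinearMap.range Φ) := by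
        rw [LinearMap.finrank_range_of_inj hΦ, Module.finrank_pi_fintype]
        simp
    _ ≤ _ := Submodule.finrank_mono hrange

theorem kronecker_one_mul_kronecker_mul_kronecker_one {R : Type*} [CommRing R] [DecidableEq n]
    (U A W : Matrix m m R) (B : Matrix n n R) :
    (U ⊗ₖ (1 : Matrix n n R)) * (A ⊗ₖ B) * (W ⊗ₖ 1) = (U * A * W) ⊗ₖ B := by
  rw [← mul_kronecker_mul, ← mul_kronecker_mul, Matrix.one_mul, Matrix.mul_one]

omit [Fintype m] [Fintype n] in
theorem sub_kronecker {R : Type*} [Ring R] {p : Type*} (A₁ A₂ : Matrix l m R)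
    (B : Matrix n p R) : (A₁ - A₂) ⊗ₖ B = A₁ ⊗ₖ B - A₂ ⊗ₖ B := by
  ext
  simp [sub_mul]

theorem one_kronecker_add_smul_kronecker_sub_conj {R : Type*} [CommRing R] [DecidableEq m]
    [DecidableEq n] (U D W : Matrix m m R) (M K : Matrix n n R) (τ : R) :
    (1 ⊗ₖ M + τ • ((U * D * W) ⊗ₖ K)) -
        (U ⊗ₖ (1 : Matrix n n R)) * (1 ⊗ₖ M + τ • (D ⊗ₖ K)) * (W ⊗ₖ 1) =
      (1 - U * W) ⊗ₖ M := by
  rw [Matrix.mul_add, Matrix.add_mul, Matrix.mul_smul, Matrix.smul_mul,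
    kronecker_one_mul_kronecker_mul_kronecker_one, kronecker_one_mul_kronecker_mul_kronecker_one,
    Matrix.mul_one, add_sub_add_right_eq_sub, sub_kronecker]

omit [Fintype m] [Fintype n] in
theorem map_kronecker {R S : Type*} [NonAssocSemiring R] [NonAssocSemiring S] (f : R →+* S)
    {p : Type*} (A : Matrix l m R) (B : Matrix n p R) :
    (A ⊗ₖ B).map f = A.map f ⊗ₖ B.map f :=
  ext fun _ _ => map_mul f _ _

end Matrix

theorem stmt_1_general {s n : ℕ}
    (U V : Matrix (Fin s) (Fin s) ℝ) (hU : Uᵀ * U = 1)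
    (d : Fin s → ℝ)
    (M K : Matrix (Fin n) (Fin n) ℝ) (hM : M.PosDef)
    (τ : ℝ)
    (Θ P_RK : Matrix (Fin s × Fin n) (Fin s × Fin n) ℝ)
    (hΘ : Θ = (1 : Matrix (Fin s) (Fin s) ℝ) ⊗ₖ M +
        τ • ((U * Matrix.diagonal d * Vᵀ) ⊗ₖ K))
    (hP : P_RK = (U ⊗ₖ (1 : Matrix (Fin n) (Fin n) ℝ)) *
        ((1 : Matrix (Fin s) (Fin s) ℝ) ⊗ₖ M + τ • (Matrix.diagonal d ⊗ₖ K)) *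
        (Vᵀ ⊗ₖ (1 : Matrix (Fin n) (Fin n) ℝ)))
    (k : ℕ)
    (hmult : Module.finrank ℂ
      (Module.End.eigenspace
        (Matrix.toLin' ((Uᵀ * V).map Complex.ofReal)) 1) = k) :
    k * n ≤ Module.finrank ℂ
      (LinearMap.ker
        (Matrix.toLin' ((Θ.map Complex.ofReal) - (P_RK.map Complex.ofReal)))) := by
  have hdiff : Θ - P_RK = (1 - U * Vᵀ) ⊗ₖ M := by
    rw [hΘ, hP]
    exact one_kronecker_add_smul_kronecker_sub_conj U (diagonal d) Vᵀ M K τ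
  let f : ℝ →+* ℂ := Complex.ofRealHom
  have hUc : (U.map f)ᵀ * U.map f = 1 := by
    rw [← transpose_map, ← RingHom.mapMatrix_apply, ← RingHom.mapMatrix_apply, ← map_mul, hU,
      map_one]
  have hMc : IsUnit (M.map f) := by
    rw [isUnit_iff_isUnit_det, ← RingHom.mapMatrix_apply, ← RingHom.map_det]
    exact hM.det_pos.ne'.isUnit.map f
  have hdiffc : Θ.map Complex.ofReal - P_RK.map Complex.ofReal =
      (1 - U.map f * (V.map f)ᵀ) ⊗ₖ M.map f := by
    rw [← Matrix.map_sub _ Complex.ofReal_sub, hdiff]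
    change ((1 - U * Vᵀ) ⊗ₖ M).map f = _
    rw [map_kronecker, ← transpose_map]
    simp only [← RingHom.mapMatrix_apply, map_sub, map_one, map_mul]
  have hUVc : (Uᵀ * V).map Complex.ofReal = (U.map f)ᵀ * V.map f := by
    rw [← transpose_map]
    exact map_mul f.mapMatrix Uᵀ V
  rw [hdiffc, ← hmult, hUVc, finrank_eigenspace_one_eq_finrank_ker_one_sub_mul_transpose hUc,
    toLin'_apply', toLin'_apply', mul_comm]
  simpa only [Fintype.card_fin] using mul_finrank_ker_le_finrank_ker_kronecker _ hMc

theorem stmt_1 {s n : ℕ} (hs : 0 < s) (hn : 0 < n)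
    (U V : Matrix (Fin s) (Fin s) ℝ) (hU : Uᵀ * U = 1) (hV : Vᵀ * V = 1)
    (d : Fin s → ℝ) (hd : ∀ i, 0 < d i)
    (M K : Matrix (Fin n) (Fin n) ℝ) (hM : M.PosDef) (hK : K.PosSemidef)
    (τ : ℝ) (hτ : 0 < τ)
    (hray : ∀ y : Fin s → ℂ, y ≠ 0 →
      0 < ((star y ⬝ᵥ ((Uᵀ * V).map Complex.ofReal) *ᵥ y) / (star y ⬝ᵥ y)).re)
    (Θ P_RK : Matrix (Fin s × Fin n) (Fin s × Fin n) ℝ)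
    (hΘ : Θ = (1 : Matrix (Fin s) (Fin s) ℝ) ⊗ₖ M +
        τ • ((U * Matrix.diagonal d * Vᵀ) ⊗ₖ K))
    (hP : P_RK = (U ⊗ₖ (1 : Matrix (Fin n) (Fin n) ℝ)) *
        ((1 : Matrix (Fin s) (Fin s) ℝ) ⊗ₖ M + τ • (Matrix.diagonal d ⊗ₖ K)) *
        (Vᵀ ⊗ₖ (1 : Matrix (Fin n) (Fin n) ℝ)))
    (k : ℕ) (hk : 1 ≤ k)
    (hmult : Module.finrank ℂ
      (Module.End.eigenspace
        (Matrix.toLin' ((Uᵀ * V).map Complex.ofReal)) 1) = k) :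
    k * n ≤ Module.finrank ℂ
      (LinearMap.ker
        (Matrix.toLin' ((Θ.map Complex.ofReal) - (P_RK.map Complex.ofReal)))) :=
  stmt_1_general U V hU d M K hM τ Θ P_RK hΘ hP k hmult
end

section
/- Let A be an invertible real s×s matrix and suppose A = U₁Σ₁V₁ᵀ and A = U₂Σ₂V₂ᵀ are two singular value decompositions of A, where U₁, V₁, U₂, V₂ are real orthogonal s×s matrices and Σ₁, Σ₂ are diagonal s×s matrices with nonnegative diagonal entries. Then the matrices U₁ᵀV₁ and U₂ᵀV₂ are orthogonally similar: the matrix Q := V₁ᵀV₂ is real orthogonal and U₂ᵀV₂ = Qᵀ(U₁ᵀV₁)Q. In particular, U₁ᵀV₁ and U₂ᵀV₂ have the same eigenvalues, so the field of values of UᵀV arising from a singular value decomposition of an invertible matrix A is uniquely determined by A. -/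
/-!
Writing an SVD as `A = (U Vᵀ) (V Σ Vᵀ)` exhibits a polar decomposition of `A`. The positive
semidefinite factor `V Σ Vᵀ` is the unique positive semidefinite square root of `Aᵀ A`, so both
decompositions share it; as it is invertible when `A` is, the orthogonal factors agree too:
`U₁ V₁ᵀ = U₂ V₂ᵀ`. Conjugating `U₁ᵀ V₁ = V₁ᵀ (U₁ V₁ᵀ)ᵀ V₁` by `Q = V₁ᵀ V₂` then gives
`V₂ᵀ (U₂ V₂ᵀ)ᵀ V₂ = U₂ᵀ V₂`.
-/

open Matrix
open scoped ComplexOrder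

namespace Matrix

theorem PosSemidef.eq_of_sq_eq_sq {n 𝕜 : Type*} [Fintype n] [DecidableEq n] [RCLike 𝕜]
    {P Q : Matrix n n 𝕜} (hP : P.PosSemidef) (hQ : Q.PosSemidef) (h : P ^ 2 = Q ^ 2) :
    P = Q := by
  open scoped MatrixOrder Matrix.Norms.L2Operator in
  exact (CFC.sq_eq_sq_iff P Q hP.nonneg hQ.nonneg).mp h

theorem posSemidef_mul_diagonal_mul_transpose {n : Type*} [Fintype n] [DecidableEq n]
    (V : Matrix n n ℝ) {d : n → ℝ} (hd : ∀ i, 0 ≤ d i) :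
    (V * diagonal d * Vᵀ).PosSemidef := by
  simpa only [conjTranspose_eq_transpose_of_trivial] using
    (posSemidef_diagonal_iff.mpr hd).mul_mul_conjTranspose_same V

section Orthogonal

variable {n R : Type*} [Fintype n] [DecidableEq n] [CommRing R]

theorem transpose_mul_cancel_left {B : Matrix n n R} (hB : Bᵀ * B = 1) (X : Matrix n n R) :
    Bᵀ * (B * X) = X := by
  rw [← Matrix.mul_assoc, hB, Matrix.one_mul]

theorem mul_transpose_cancel_left {B : Matrix n n R} (hB : Bᵀ * B = 1) (X : Matrix n n R) :
    B * (Bᵀ * X) = X := by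
  rw [← Matrix.mul_assoc, mul_eq_one_comm.mp hB, Matrix.one_mul]

theorem transpose_mul_transpose_mul_self_eq_one {V W : Matrix n n R} (hV : Vᵀ * V = 1)
    (hW : Wᵀ * W = 1) : (Vᵀ * W)ᵀ * (Vᵀ * W) = 1 := by
  simp only [transpose_mul, transpose_transpose, Matrix.mul_assoc]
  rw [mul_transpose_cancel_left hV, hW]

variable (U V : Matrix n n R) (d : n → R)

theorem mul_diagonal_mul_transpose_eq_polar (hV : Vᵀ * V = 1) :
    U * diagonal d * Vᵀ = U * Vᵀ * (V * diagonal d * Vᵀ) := by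
  simp only [Matrix.mul_assoc, transpose_mul_cancel_left hV]

theorem transpose_mul_self_mul_diagonal_mul_transpose (hU : Uᵀ * U = 1) (hV : Vᵀ * V = 1) :
    (U * diagonal d * Vᵀ)ᵀ * (U * diagonal d * Vᵀ) = (V * diagonal d * Vᵀ) ^ 2 := by
  simp only [pow_two, transpose_mul, transpose_transpose, diagonal_transpose, Matrix.mul_assoc]
  rw [transpose_mul_cancel_left hU, transpose_mul_cancel_left hV]

theorem transpose_mul_eq_conj_of_mul_transpose_eq {U₁ V₁ U₂ V₂ : Matrix n n R}
    (hV₁ : V₁ᵀ * V₁ = 1) (hV₂ : V₂ᵀ * V₂ = 1) (h : U₁ * V₁ᵀ = U₂ * V₂ᵀ) :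
    U₂ᵀ * V₂ = (V₁ᵀ * V₂)ᵀ * (U₁ᵀ * V₁) * (V₁ᵀ * V₂) := by
  have hT : V₁ * U₁ᵀ = V₂ * U₂ᵀ := by simpa using congrArg transpose h
  simp only [transpose_mul, transpose_transpose, Matrix.mul_assoc]
  rw [mul_transpose_cancel_left hV₁, ← Matrix.mul_assoc V₁, hT, Matrix.mul_assoc V₂,
    transpose_mul_cancel_left hV₂]

end Orthogonal

section SVD

variable {n : Type*} [Fintype n] [DecidableEq n] {A U₁ V₁ U₂ V₂ : Matrix n n ℝ} {d₁ d₂ : n → ℝ}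

theorem svd_posSemidef_factor_unique (hU₁ : U₁ᵀ * U₁ = 1) (hV₁ : V₁ᵀ * V₁ = 1)
    (hU₂ : U₂ᵀ * U₂ = 1) (hV₂ : V₂ᵀ * V₂ = 1) (hd₁ : ∀ i, 0 ≤ d₁ i) (hd₂ : ∀ i, 0 ≤ d₂ i)
    (hSVD₁ : A = U₁ * diagonal d₁ * V₁ᵀ) (hSVD₂ : A = U₂ * diagonal d₂ * V₂ᵀ) :
    V₁ * diagonal d₁ * V₁ᵀ = V₂ * diagonal d₂ * V₂ᵀ := by
  refine (posSemidef_mul_diagonal_mul_transpose V₁ hd₁).eq_of_sq_eq_sq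
    (posSemidef_mul_diagonal_mul_transpose V₂ hd₂) ?_
  rw [← transpose_mul_self_mul_diagonal_mul_transpose U₁ V₁ d₁ hU₁ hV₁,
    ← transpose_mul_self_mul_diagonal_mul_transpose U₂ V₂ d₂ hU₂ hV₂, ← hSVD₁, ← hSVD₂]

theorem svd_orthogonal_factor_unique (hA : IsUnit A) (hU₁ : U₁ᵀ * U₁ = 1)
    (hV₁ : V₁ᵀ * V₁ = 1) (hU₂ : U₂ᵀ * U₂ = 1) (hV₂ : V₂ᵀ * V₂ = 1) (hd₁ : ∀ i, 0 ≤ d₁ i)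
    (hd₂ : ∀ i, 0 ≤ d₂ i) (hSVD₁ : A = U₁ * diagonal d₁ * V₁ᵀ)
    (hSVD₂ : A = U₂ * diagonal d₂ * V₂ᵀ) :
    U₁ * V₁ᵀ = U₂ * V₂ᵀ := by
  have hP := svd_posSemidef_factor_unique hU₁ hV₁ hU₂ hV₂ hd₁ hd₂ hSVD₁ hSVD₂
  have hpolar₁ := hSVD₁.trans (mul_diagonal_mul_transpose_eq_polar U₁ V₁ d₁ hV₁)
  have hpolar₂ := hSVD₂.trans (mul_diagonal_mul_transpose_eq_polar U₂ V₂ d₂ hV₂)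
  have hPunit : IsUnit (V₁ * diagonal d₁ * V₁ᵀ) :=
    isUnit_of_mul_isUnit_right (hpolar₁ ▸ hA)
  refine hPunit.mul_right_cancel ?_
  rw [← hpolar₁, hP, ← hpolar₂]

end SVD

end Matrix

theorem stmt_2 {s : ℕ} (A : Matrix (Fin s) (Fin s) ℝ) (hA : IsUnit A)
    (U₁ V₁ U₂ V₂ : Matrix (Fin s) (Fin s) ℝ)
    (hU₁ : U₁ᵀ * U₁ = 1) (hV₁ : V₁ᵀ * V₁ = 1)
    (hU₂ : U₂ᵀ * U₂ = 1) (hV₂ : V₂ᵀ * V₂ = 1)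
    (d₁ d₂ : Fin s → ℝ) (hd₁ : ∀ i, 0 ≤ d₁ i) (hd₂ : ∀ i, 0 ≤ d₂ i)
    (hSVD₁ : A = U₁ * Matrix.diagonal d₁ * V₁ᵀ)
    (hSVD₂ : A = U₂ * Matrix.diagonal d₂ * V₂ᵀ) :
    (V₁ᵀ * V₂)ᵀ * (V₁ᵀ * V₂) = 1 ∧
      U₂ᵀ * V₂ = (V₁ᵀ * V₂)ᵀ * (U₁ᵀ * V₁) * (V₁ᵀ * V₂) :=
  ⟨transpose_mul_transpose_mul_self_eq_one hV₁ hV₂,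
    transpose_mul_eq_conj_of_mul_transpose_eq hV₁ hV₂ <|
      svd_orthogonal_factor_unique hA hU₁ hV₁ hU₂ hV₂ hd₁ hd₂ hSVD₁ hSVD₂⟩
end

section
/- Let Φ be an m×m matrix, Ψ₁ an m×n matrix, Ψ₂ an n×m matrix, and Θ an invertible n×n matrix over a field, and suppose the Schur complement S := Φ − Ψ₁Θ⁻¹Ψ₂ is invertible. Let A be the block matrix with blocks [[Φ, Ψ₁],[Ψ₂, Θ]] and let P be the block upper-triangular preconditioner with blocks [[S, Ψ₁],[0, Θ]]. Then (P⁻¹A − I)² = 0. Consequently the spectrum of the preconditioned matrix P⁻¹A is exactly {1} and its minimal polynomial divides (X − 1)², i.e., has degree at most 2. -/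
/-!
The block matrix factors as `A = P * (1 + N)` with `N = [[0, 0], [Θ⁻¹Ψ₂, 0]]`: the Schur
complement in the upper-left block of `P` is exactly what makes the upper-left block of the
product equal `Φ`. Since `N² = 0`, the matrix `P⁻¹A = 1 + N` is unipotent, so its spectrum is `{1}`.
-/

open Matrix

theorem spectrum_eq_zero_of_isNilpotent {F A : Type*} [Field F] [Ring A] [Algebra F A]
    [Nontrivial A] {a : A} (ha : IsNilpotent a) : spectrum F a = {0} := by
  ext r
  rw [spectrum.mem_iff, Set.mem_singleton_iff]
  constructor
  · intro h
    by_contra hr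
    rw [sub_eq_add_neg] at h
    exact h <| ha.neg.isUnit_add_left_of_commute
      ((algebraMap F A).isUnit_map (isUnit_iff_ne_zero.mpr hr))
      (Algebra.commutes r (-a)).symm
  · rintro rfl
    simpa using ha.neg.not_isUnit

theorem spectrum_one_add_of_isNilpotent {F A : Type*} [Field F] [Ring A] [Algebra F A]
    [Nontrivial A] {a : A} (ha : IsNilpotent a) : spectrum F (1 + a) = {1} := by
  rw [← map_one (algebraMap F A), ← spectrum.singleton_add_eq, spectrum_eq_zero_of_isNilpotent ha,
    Set.singleton_add_singleton, add_zero]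

namespace Matrix

variable {m n R : Type*} [Fintype m] [Fintype n] [DecidableEq m] [DecidableEq n]

theorem fromBlocks_zero_zero_sq [Ring R] (C : Matrix n m R) :
    fromBlocks (0 : Matrix m m R) 0 C (0 : Matrix n n R) ^ 2 = 0 := by
  simp [sq, fromBlocks_multiply]

variable [CommRing R]

theorem fromBlocks_eq_fromBlocks_schur_mul (Φ : Matrix m m R) (Ψ₁ : Matrix m n R)
    (Ψ₂ : Matrix n m R) (Θ : Matrix n n R) (hΘ : IsUnit Θ.det) :
    fromBlocks Φ Ψ₁ Ψ₂ Θ =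
      fromBlocks (Φ - Ψ₁ * Θ⁻¹ * Ψ₂) Ψ₁ 0 Θ * (1 + fromBlocks 0 0 (Θ⁻¹ * Ψ₂) 0) := by
  rw [mul_add, mul_one, fromBlocks_multiply, fromBlocks_add]
  simp [← Matrix.mul_assoc, mul_nonsing_inv _ hΘ]

theorem inv_fromBlocks_schur_mul_fromBlocks (Φ : Matrix m m R) (Ψ₁ : Matrix m n R)
    (Ψ₂ : Matrix n m R) (Θ : Matrix n n R) (hΘ : IsUnit Θ.det)
    (hS : IsUnit (Φ - Ψ₁ * Θ⁻¹ * Ψ₂).det) :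
    (fromBlocks (Φ - Ψ₁ * Θ⁻¹ * Ψ₂) Ψ₁ 0 Θ)⁻¹ * fromBlocks Φ Ψ₁ Ψ₂ Θ =
      1 + fromBlocks 0 0 (Θ⁻¹ * Ψ₂) 0 := by
  have hP : IsUnit (fromBlocks (Φ - Ψ₁ * Θ⁻¹ * Ψ₂) Ψ₁ 0 Θ).det := by
    rw [det_fromBlocks_zero₂₁]
    exact hS.mul hΘ
  rw [fromBlocks_eq_fromBlocks_schur_mul Φ Ψ₁ Ψ₂ Θ hΘ, ← Matrix.mul_assoc, nonsing_inv_mul _ hP,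
    Matrix.one_mul]

end Matrix

theorem stmt_9 {m n : ℕ} (hmn : 0 < m + n) {F : Type*} [Field F]
    (Φ : Matrix (Fin m) (Fin m) F) (Ψ₁ : Matrix (Fin m) (Fin n) F)
    (Ψ₂ : Matrix (Fin n) (Fin m) F) (Θ : Matrix (Fin n) (Fin n) F)
    (hΘ : IsUnit Θ.det)
    (hS : IsUnit (Φ - Ψ₁ * Θ⁻¹ * Ψ₂).det) :
    ((Matrix.fromBlocks (Φ - Ψ₁ * Θ⁻¹ * Ψ₂) Ψ₁ 0 Θ)⁻¹ *
        (Matrix.fromBlocks Φ Ψ₁ Ψ₂ Θ) - 1) ^ 2 = 0 ∧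
      spectrum F ((Matrix.fromBlocks (Φ - Ψ₁ * Θ⁻¹ * Ψ₂) Ψ₁ 0 Θ)⁻¹ *
        (Matrix.fromBlocks Φ Ψ₁ Ψ₂ Θ)) = {1} := by
  have : Nonempty (Fin m ⊕ Fin n) := Fintype.card_pos_iff.mp (by simpa using hmn)
  have hN := fromBlocks_zero_zero_sq (m := Fin m) (Θ⁻¹ * Ψ₂)
  rw [inv_fromBlocks_schur_mul_fromBlocks Φ Ψ₁ Ψ₂ Θ hΘ hS, add_sub_cancel_left]
  exact ⟨hN, spectrum_one_add_of_isNilpotent ⟨2, hN⟩⟩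
end

section
/- Let U and V be real orthogonal s×s matrices, M a symmetric positive definite real n×n matrix, K a symmetric positive semidefinite real n×n matrix, Σ a symmetric positive semidefinite real s×s matrix, and τ > 0. Then the SVD-based preconditioner P_RK := (U⊗Iₙ)(Iₛ⊗M + τΣ⊗K)(Vᵀ⊗Iₙ) is invertible. -/
/-! The outer Kronecker factors are invertible because `U` and `Vᵀ` have one-sided inverses, and the
middle factor `Iₛ ⊗ M + τ Σ ⊗ K` is positive definite (positive definite plus positive semidefinite),
hence invertible. -/

open Matrix Kronecker

open scoped ComplexOrder in
theorem Matrix.PosDef.one_kronecker_add_smul_kronecker {𝕜 m n : Type*} [RCLike 𝕜]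
    [Fintype m] [DecidableEq m] [Fintype n] {M K : Matrix n n 𝕜} {S : Matrix m m 𝕜}
    (hM : M.PosDef) (hK : K.PosSemidef) (hS : S.PosSemidef) {τ : ℝ} (hτ : 0 ≤ τ) :
    ((1 : Matrix m m 𝕜) ⊗ₖ M + τ • (S ⊗ₖ K)).PosDef :=
  (PosDef.one.kronecker hM).add_posSemidef ((hS.kronecker hK).smul hτ)

theorem stmt_11 {s n : ℕ}
    (U V : Matrix (Fin s) (Fin s) ℝ) (hU : Uᵀ * U = 1) (hV : Vᵀ * V = 1)
    (M K : Matrix (Fin n) (Fin n) ℝ) (hM : M.PosDef) (hK : K.PosSemidef)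
    (Sig : Matrix (Fin s) (Fin s) ℝ) (hSig : Sig.PosSemidef)
    (τ : ℝ) (hτ : 0 < τ) :
    IsUnit ((U ⊗ₖ (1 : Matrix (Fin n) (Fin n) ℝ)) *
      ((1 : Matrix (Fin s) (Fin s) ℝ) ⊗ₖ M + τ • (Sig ⊗ₖ K)) *
      (Vᵀ ⊗ₖ (1 : Matrix (Fin n) (Fin n) ℝ))) := by
  have hUunit : IsUnit U := .of_mul_eq_one_right _ hU
  have hVunit : IsUnit Vᵀ := .of_mul_eq_one _ hV
  have hmid := (hM.one_kronecker_add_smul_kronecker hK hSig hτ.le).isUnit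
  exact ((hUunit.kronecker isUnit_one).mul hmid).mul (hVunit.kronecker isUnit_one)
end

section
/- Let A_RK = UΣVᵀ be a singular value decomposition of a real s×s matrix (U, V real orthogonal, Σ diagonal with positive diagonal entries), let M be a symmetric positive definite real n×n matrix, K a symmetric positive semidefinite real n×n matrix, and τ > 0. Assume that for every nonzero complex vector y ∈ ℂˢ the real part of the Rayleigh quotient y*(UᵀV)y/(y*y) is positive. Then the Runge–Kutta stage matrix Θ := Iₛ⊗M + τ A_RK⊗K is invertible. -/
/-!
Writing `Σ = diagonal d` and `W = UᵀV`, orthogonality of `U` and `V` gives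
`Θ = (U ⊗ I) (W ⊗ M + τ Σ ⊗ K) (Vᵀ ⊗ I)`. Testing the Rayleigh hypothesis on real vectors shows
that `W + Wᵀ` is positive definite, so the symmetric part of the middle factor is
`(W + Wᵀ) ⊗ M` (positive definite) plus a positive semidefinite term. A real matrix whose
symmetric part is positive definite has trivial kernel, as `xᵀ(A + Aᵀ)x = 2 xᵀAx`.
-/

open Matrix Kronecker

namespace Matrix

variable {ι κ : Type*}

lemma posDef_add_add_transpose {A B : Matrix ι ι ℝ} (hA : (A + Aᵀ).PosDef)
    (hB : B.PosSemidef) : (A + B + (A + B)ᵀ).PosDef := by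
  rw [transpose_add, add_add_add_comm]
  exact hA.add_posSemidef (hB.add hB.transpose)

variable [Fintype ι] [Fintype κ]

lemma dotProduct_add_transpose_mulVec (A : Matrix ι ι ℝ) (x : ι → ℝ) :
    x ⬝ᵥ ((A + Aᵀ) *ᵥ x) = 2 * (x ⬝ᵥ (A *ᵥ x)) := by
  rw [add_mulVec, dotProduct_add, mulVec_transpose, dotProduct_comm x (x ᵥ* A),
    ← dotProduct_mulVec]
  ring

lemma isUnit_of_posDef_add_transpose [DecidableEq ι] {A : Matrix ι ι ℝ}
    (hA : (A + Aᵀ).PosDef) : IsUnit A := by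
  rw [isUnit_iff_isUnit_det, isUnit_iff_ne_zero]
  intro hdet
  obtain ⟨v, hv, hAv⟩ := exists_mulVec_eq_zero_iff.mpr hdet
  have hpos := hA.dotProduct_mulVec_pos hv
  rw [star_trivial, dotProduct_add_transpose_mulVec, hAv, dotProduct_zero, mul_zero] at hpos
  exact hpos.false

lemma PosDef.kronecker_add_transpose {A : Matrix ι ι ℝ} {M : Matrix κ κ ℝ}
    (hA : (A + Aᵀ).PosDef) (hM : M.PosDef) : (A ⊗ₖ M + (A ⊗ₖ M)ᵀ).PosDef := by
  have hMT : Mᵀ = M := by rw [← conjTranspose_eq_transpose_of_trivial, hM.isHermitian.eq]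
  rw [← kroneckerMap_transpose, hMT, ← add_kronecker]
  exact hA.kronecker hM

lemma dotProduct_mulVec_pos_of_re_rayleigh_pos (W : Matrix ι ι ℝ)
    (hW : ∀ y : ι → ℂ, y ≠ 0 →
      0 < ((star y ⬝ᵥ (W.map Complex.ofReal) *ᵥ y) / (star y ⬝ᵥ y)).re)
    {x : ι → ℝ} (hx : x ≠ 0) : 0 < x ⬝ᵥ (W *ᵥ x) := by
  set y : ι → ℂ := Complex.ofRealHom ∘ x
  have hy : y ≠ 0 := fun h => hx (funext fun i => by simpa [y] using congrFun h i)
  have hstar : star y = y := funext fun i => Complex.conj_ofReal (x i)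
  have hmap : W.map Complex.ofReal *ᵥ y = Complex.ofRealHom ∘ (W *ᵥ x) :=
    funext fun i => (RingHom.map_mulVec Complex.ofRealHom W x i).symm
  have hquot := hW y hy
  rw [hstar, hmap, ← RingHom.map_dotProduct, ← RingHom.map_dotProduct, Complex.ofRealHom_eq_coe,
    Complex.ofRealHom_eq_coe, ← Complex.ofReal_div, Complex.ofReal_re] at hquot
  have hxx : 0 < x ⬝ᵥ x := by simpa using dotProduct_star_self_pos_iff.mpr hx
  exact (div_pos_iff_of_pos_right hxx).mp hquot

lemma posDef_add_transpose_of_re_rayleigh_pos (W : Matrix ι ι ℝ)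
    (hW : ∀ y : ι → ℂ, y ≠ 0 →
      0 < ((star y ⬝ᵥ (W.map Complex.ofReal) *ᵥ y) / (star y ⬝ᵥ y)).re) :
    (W + Wᵀ).PosDef := by
  refine .of_dotProduct_mulVec_pos ?_ fun x hx => ?_
  · rw [IsHermitian, conjTranspose_eq_transpose_of_trivial, transpose_add, transpose_transpose,
      add_comm]
  · rw [star_trivial, dotProduct_add_transpose_mulVec]
    exact mul_pos two_pos (dotProduct_mulVec_pos_of_re_rayleigh_pos W hW hx)

end Matrix

theorem stmt_12 {s n : ℕ}
    (U V : Matrix (Fin s) (Fin s) ℝ) (hU : Uᵀ * U = 1) (hV : Vᵀ * V = 1)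
    (d : Fin s → ℝ) (hd : ∀ i, 0 < d i)
    (M K : Matrix (Fin n) (Fin n) ℝ) (hM : M.PosDef) (hK : K.PosSemidef)
    (τ : ℝ) (hτ : 0 < τ)
    (hray : ∀ y : Fin s → ℂ, y ≠ 0 →
      0 < ((star y ⬝ᵥ ((Uᵀ * V).map Complex.ofReal) *ᵥ y) / (star y ⬝ᵥ y)).re) :
    IsUnit ((1 : Matrix (Fin s) (Fin s) ℝ) ⊗ₖ M +
      τ • ((U * Matrix.diagonal d * Vᵀ) ⊗ₖ K)) := by
  set W := Uᵀ * V
  have hcore : IsUnit (W ⊗ₖ M + τ • (diagonal d ⊗ₖ K)) := by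
    refine isUnit_of_posDef_add_transpose (posDef_add_add_transpose ?_ ?_)
    · exact (posDef_add_transpose_of_re_rayleigh_pos W hray).kronecker_add_transpose hM
    · exact ((PosSemidef.diagonal fun i => (hd i).le).kronecker hK).smul hτ.le
  have hUUt : U * Uᵀ = 1 := mul_eq_one_comm.mp hU
  have hVVt : V * Vᵀ = 1 := mul_eq_one_comm.mp hV
  have hfactor : 1 ⊗ₖ M + τ • ((U * diagonal d * Vᵀ) ⊗ₖ K) =
      (U ⊗ₖ 1) * (W ⊗ₖ M + τ • (diagonal d ⊗ₖ K)) * (Vᵀ ⊗ₖ 1) := by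
    rw [Matrix.mul_add, Matrix.add_mul, mul_smul_comm, smul_mul_assoc, ← mul_kronecker_mul,
      ← mul_kronecker_mul, ← mul_kronecker_mul, ← mul_kronecker_mul, ← Matrix.mul_assoc, hUUt,
      Matrix.one_mul, hVVt]
    simp only [Matrix.one_mul, Matrix.mul_one]
  rw [hfactor]
  exact (((IsUnit.of_mul_eq_one_right Uᵀ hU).kronecker isUnit_one).mul hcore).mul
    ((IsUnit.of_mul_eq_one_right V hVVt).kronecker isUnit_one)
end
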